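/- arXiv:2209.13862 — 2 statements merged into one kernel-verified Lean document; each statement's English description precedes it below -/
import Mathlib

section
/- Let P_X be a pmf supported on a finite alphabet 𝒳 with |𝒳| ≥ 3, and let p_max = max_x P_X(x). Then the minimal expected log-loss under 2 guesses equals min over pmfs Q on 𝒳×𝒳 of Σ_x P_X(x)·log(1/Q({(a,b) : a=x or b=x})) = H(X) − h_b(max{1/2, p_max}), where H(X) is the Shannon entropy of P_X and h_b(t) = −t·log t − (1−t)·log(1−t) is the binary entropy function. -/
open Finset

/-- A probability mass function on a finite type. -/
def IsPMF {α : Type*} [Fintype α] (p : α → ℝ) : Prop :=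
  (∀ a, 0 ≤ p a) ∧ ∑ a, p a = 1

open Classical in
/-- The probability that a 2-guess strategy `Q` (a pmf on `X × X`) covers `x`. -/
noncomputable def covers2 {X : Type*} [Fintype X] (Q : X × X → ℝ) (x : X) : ℝ :=
  ∑ z : X × X, if z.1 = x ∨ z.2 = x then Q z else 0

/-- The log-loss `ℓ_1(q) = log (1/q)`, valued in `EReal` so that `ℓ_1(0) = ⊤`. -/
noncomputable def logLossE (q : ℝ) : EReal :=
  if q = 0 then ⊤ else ((Real.log (1 / q) : ℝ) : EReal)

/-- The binary entropy function `h_b(t) = −t log t − (1−t) log (1−t)`. -/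
noncomputable def binEnt (t : ℝ) : ℝ :=
  -(t * Real.log t) - (1 - t) * Real.log (1 - t)

/-! Writing `c x = covers2 Q x`, every 2-guess strategy has `0 ≤ c ≤ 1` and `∑ c ≤ 2`
(double counting), and conversely every profile with `0 ≤ q ≤ 1`, `∑ q = 2` is realised by
systematic sampling. So the problem is to minimise the cross entropy `∑ P log (1 / c)` over such
profiles. Let `x₀` be a mode of `P` and `t = max (1/2) (P x₀)`. The profile `q = P / t` at `x₀`
and `q = P / (1 - t)` elsewhere is feasible and has value `H(X) - h_b(t)`. It is optimal by
Gibbs' inequality (`log u ≤ u - 1`): for feasible `c`,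
`∑ P c / q = t c x₀ + (1 - t) ∑_{x ≠ x₀} c x ≤ (2t - 1) c x₀ + 2 (1 - t) ≤ 1`, since `t ≥ 1/2`. -/

lemma EReal.coe_finset_sum {α : Type*} (s : Finset α) (f : α → ℝ) :
    ((∑ a ∈ s, f a : ℝ) : EReal) = ∑ a ∈ s, (f a : EReal) :=
  map_sum (⟨⟨Real.toEReal, EReal.coe_zero⟩, EReal.coe_add⟩ : ℝ →+ EReal) f s

lemma Finset.sum_ite_eq_mul {α R : Type*} [Fintype α] [DecidableEq α] [CommRing R] (a₀ : α)
    (u v : R) (f : α → R) :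
    ∑ a, (if a = a₀ then u else v) * f a = v * ∑ a, f a + (u - v) * f a₀ := by
  have h : ∀ a,
      (if a = a₀ then u else v) * f a = v * f a + if a = a₀ then (u - v) * f a else 0 :=
    fun a => by split_ifs <;> ring
  simp only [h, Finset.sum_add_distrib, ← Finset.mul_sum, Finset.sum_ite_eq', Finset.mem_univ,
    if_true]

lemma IsPMF.add_le_one {α : Type*} [Fintype α] [DecidableEq α] {P : α → ℝ} (hP : IsPMF P)
    {a b : α} (hab : a ≠ b) : P a + P b ≤ 1 := by
  simpa [hP.2, Finset.sum_pair hab] using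
    Finset.sum_le_sum_of_subset_of_nonneg (Finset.subset_univ {a, b}) fun c _ _ => hP.1 c

section Covers

variable {X : Type*} [Fintype X]

lemma covers2_eq_sum_add_sum_sub (Q : X × X → ℝ) (x : X) :
    covers2 Q x = ∑ b, Q (x, b) + ∑ a, Q (a, x) - Q (x, x) := by
  classical
  have h : ∀ z : X × X, (if z.1 = x ∨ z.2 = x then Q z else 0)
      = (if z.1 = x then Q z else 0) + (if z.2 = x then Q z else 0)
        - if z = (x, x) then Q z else 0 := by
    rintro ⟨a, b⟩
    by_cases ha : a = x <;> by_cases hb : b = x <;> simp [ha, hb]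
  rw [covers2]
  simp only [h, Finset.sum_sub_distrib, Finset.sum_add_distrib, Finset.sum_ite_eq',
    Finset.mem_univ, if_true, Fintype.sum_prod_type]
  rw [Finset.sum_comm]
  simp

lemma covers2_nonneg {Q : X × X → ℝ} (hQ : IsPMF Q) (x : X) : 0 ≤ covers2 Q x :=
  Finset.sum_nonneg fun z _ => by split_ifs <;> simp [hQ.1 z]

lemma covers2_le_one {Q : X × X → ℝ} (hQ : IsPMF Q) (x : X) : covers2 Q x ≤ 1 :=
  hQ.2 ▸ Finset.sum_le_sum fun z _ => by split_ifs <;> simp [hQ.1 z]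

lemma sum_covers2_le_two {Q : X × X → ℝ} (hQ : IsPMF Q) : ∑ x, covers2 Q x ≤ 2 := by
  have hrows : ∑ x, ∑ b, Q (x, b) = 1 := by rw [← Fintype.sum_prod_type, hQ.2]
  have hcols : ∑ x, ∑ a, Q (a, x) = 1 := by
    rw [Finset.sum_comm, ← Fintype.sum_prod_type, hQ.2]
  have hdiag : 0 ≤ ∑ x, Q (x, x) := Finset.sum_nonneg fun x _ => hQ.1 _
  simp only [covers2_eq_sum_add_sum_sub, Finset.sum_sub_distrib, Finset.sum_add_distrib, hrows,
    hcols]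
  linarith

lemma isPMF_comp_prodCongr {Y : Type*} [Fintype Y] (e : X ≃ Y) {Q : Y × Y → ℝ}
    (hQ : IsPMF Q) : IsPMF (Q ∘ e.prodCongr e) :=
  ⟨fun z => hQ.1 _, by rw [← hQ.2]; exact (e.prodCongr e).sum_comp Q⟩

lemma covers2_comp_prodCongr {Y : Type*} [Fintype Y] (e : X ≃ Y) (Q : Y × Y → ℝ) (x : X) :
    covers2 (Q ∘ e.prodCongr e) x = covers2 Q (e x) := by
  classical
  rw [covers2, covers2]
  exact Fintype.sum_equiv (e.prodCongr e) _ _ fun z => if_congr (by simp) rfl rfl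

end Covers

section Staircase

/-- The length of `[a, b] ∩ [c, d]` (zero if they are disjoint). -/
def overlap (a b c d : ℝ) : ℝ := max 0 (min b d - max a c)

lemma overlap_nonneg (a b c d : ℝ) : 0 ≤ overlap a b c d := le_max_left _ _

lemma overlap_comm (a b c d : ℝ) : overlap a b c d = overlap c d a b := by
  rw [overlap, overlap, min_comm, max_comm a]

lemma overlap_add_overlap {u v a b c : ℝ} (hab : a ≤ b) (hbc : b ≤ c) :
    overlap u v a b + overlap u v b c = overlap u v a c := by
  simp only [overlap, min_def, max_def]
  split_ifs <;> linarith

lemma sum_range_overlap {G : ℕ → ℝ} (hG : Monotone G) (u v : ℝ) (n : ℕ) :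
    ∑ k ∈ Finset.range n, overlap u v (G k) (G (k + 1)) = overlap u v (G 0) (G n) := by
  refine Finset.sum_range_induction _ (fun n => overlap u v (G 0) (G n)) ?_ n fun k _ => ?_
  · simp only [overlap, min_def, max_def]
    split_ifs <;> linarith
  · rw [overlap_add_overlap (hG k.zero_le) (hG k.le_succ)]

/-- The 2-guess strategy of systematic sampling: cut `[0, 2]` into consecutive intervals
`[F i, F (i + 1)]` and guess the two items whose intervals contain `s` and `s + 1`, for `s` uniform
in `[0, 1]`. -/
lemma exists_isPMF_covers2_eq_of_staircase {n : ℕ} {F : ℕ → ℝ} (hF : Monotone F)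
    (h0 : F 0 = 0) (hn : F n = 2) (hstep : ∀ i : Fin n, F (i + 1) ≤ F i + 1) :
    ∃ Q : Fin n × Fin n → ℝ, IsPMF Q ∧ ∀ i : Fin n, covers2 Q i = F (i + 1) - F i := by
  set Q : Fin n × Fin n → ℝ :=
    fun z => overlap (F z.1) (F (z.1 + 1)) (F z.2 - 1) (F (z.2 + 1) - 1)
  have hF' : Monotone fun k => F k - 1 := fun a b h => sub_le_sub_right (hF h) 1
  have hrow : ∀ i, ∑ j, Q (i, j) = overlap (F i) (F (i + 1)) (-1) 1 := by
    intro i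
    rw [Fin.sum_univ_eq_sum_range (fun j => overlap (F i) (F (i + 1)) (F j - 1) (F (j + 1) - 1)),
      sum_range_overlap hF', h0, hn]
    norm_num
  have hcol : ∀ j, ∑ i, Q (i, j) = overlap (F j - 1) (F (j + 1) - 1) 0 2 := by
    intro j
    simp only [Q, overlap_comm (F _)]
    rw [Fin.sum_univ_eq_sum_range (fun i => overlap (F j - 1) (F (j + 1) - 1) (F i) (F (i + 1))),
      sum_range_overlap hF, h0, hn]
  have hdiag : ∀ i, Q (i, i) = 0 := by
    intro i
    have := hstep i
    refine max_eq_left (sub_nonpos.2 ((min_le_right _ _).trans (le_trans ?_ (le_max_left _ _))))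
    linarith
  have htotal : ∑ z, Q z = 1 := by
    simp only [Fintype.sum_prod_type, hrow, overlap_comm (F _)]
    rw [Fin.sum_univ_eq_sum_range (fun i => overlap (-1) 1 (F i) (F (i + 1))),
      sum_range_overlap hF, h0, hn]
    norm_num [overlap]
  refine ⟨Q, ⟨fun z => overlap_nonneg _ _ _ _, htotal⟩, fun i => ?_⟩
  have hlo : 0 ≤ F i := h0 ▸ hF (Nat.zero_le _)
  have hmid : F i ≤ F (i + 1) := hF (Nat.le_succ _)
  have hhi : F (i + 1) ≤ 2 := hn ▸ hF i.isLt
  have := hstep i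
  rw [covers2_eq_sum_add_sum_sub, hrow, hcol, hdiag]
  simp only [overlap, min_def, max_def]
  split_ifs <;> linarith

end Staircase

lemma exists_isPMF_covers2_eq {X : Type*} [Fintype X] {q : X → ℝ} (h0 : ∀ x, 0 ≤ q x)
    (h1 : ∀ x, q x ≤ 1) (hsum : ∑ x, q x = 2) :
    ∃ Q : X × X → ℝ, IsPMF Q ∧ ∀ x, covers2 Q x = q x := by
  set n := Fintype.card X
  set e := Fintype.equivFin X
  set F : ℕ → ℝ := fun k => ∑ i : Fin n, if (i : ℕ) < k then q (e.symm i) else 0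
  have hF : Monotone F := fun a b hab => Finset.sum_le_sum fun i _ => by
    split_ifs <;> first | omega | simp [h0]
  have hFsucc : ∀ i : Fin n, F (i + 1) = F i + q (e.symm i) := by
    intro i
    have hqi : q (e.symm i) = ∑ j : Fin n, if j = i then q (e.symm j) else 0 := by simp
    rw [hqi, ← Finset.sum_add_distrib]
    refine Finset.sum_congr rfl fun j _ => ?_
    split_ifs <;> simp_all [Fin.ext_iff] <;> omega
  have hFn : F n = 2 := by
    simp only [F, Fin.is_lt, if_true]
    rw [e.symm.sum_comp q, hsum]
  obtain ⟨Q, hQ, hcov⟩ := exists_isPMF_covers2_eq_of_staircase hF (by simp [F]) hFn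
    fun i => by linarith [hFsucc i, h1 (e.symm i)]
  refine ⟨Q ∘ e.prodCongr e, isPMF_comp_prodCongr e hQ, fun x => ?_⟩
  rw [covers2_comp_prodCongr, hcov, hFsucc, e.symm_apply_apply]
  ring

open Real

lemma sum_mul_log_one_div_le {α : Type*} [Fintype α] {P q c : α → ℝ} (hP : IsPMF P)
    (hq : ∀ a, 0 < q a) (hc : ∀ a, 0 < c a) (h : ∑ a, P a * (c a / q a) ≤ 1) :
    ∑ a, P a * log (1 / q a) ≤ ∑ a, P a * log (1 / c a) := by
  have key : ∀ a, P a * log (1 / q a) - P a * log (1 / c a) ≤ P a * (c a / q a) - P a := by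
    intro a
    have hlog := log_le_sub_one_of_pos (div_pos (hc a) (hq a))
    rw [log_div (hc a).ne' (hq a).ne'] at hlog
    rw [one_div, one_div, log_inv, log_inv]
    nlinarith [hP.1 a]
  have hsum := Finset.sum_le_sum fun a (_ : a ∈ Finset.univ) => key a
  rw [Finset.sum_sub_distrib, Finset.sum_sub_distrib, hP.2] at hsum
  linarith

section TiltedProfile

variable {X : Type*} [DecidableEq X] {P : X → ℝ} {x₀ : X} {t : ℝ}

/-- For `t = max (1/2) (P x₀)` with `x₀` a mode of `P`, the optimal coverage profile. -/
noncomputable def tiltedProfile (P : X → ℝ) (x₀ : X) (t : ℝ) (x : X) : ℝ :=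
  P x / if x = x₀ then t else 1 - t

lemma tiltedProfile_pos (hP : ∀ x, 0 < P x) (ht0 : 0 < t) (ht1 : t < 1) (x : X) :
    0 < tiltedProfile P x₀ t x :=
  div_pos (hP x) (by split_ifs <;> linarith)

lemma tiltedProfile_le_one (hx₀ : P x₀ ≤ t) (hP : ∀ x ≠ x₀, P x ≤ 1 - t) (ht0 : 0 < t)
    (ht1 : t < 1) (x : X) : tiltedProfile P x₀ t x ≤ 1 := by
  unfold tiltedProfile
  split_ifs with hx
  · exact div_le_one_of_le₀ (hx ▸ hx₀) ht0.le
  · exact div_le_one_of_le₀ (hP x hx) (by linarith)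

lemma sum_tiltedProfile [Fintype X] (hP : ∑ x, P x = 1) (ht : t = 1 / 2 ∨ t = P x₀)
    (ht0 : 0 < t) (ht1 : t < 1) : ∑ x, tiltedProfile P x₀ t x = 2 := by
  have h : ∀ x, tiltedProfile P x₀ t x = (if x = x₀ then 1 / t else 1 / (1 - t)) * P x := by
    intro x
    unfold tiltedProfile
    split_ifs <;> ring
  rw [Finset.sum_congr rfl fun x _ => h x, Finset.sum_ite_eq_mul, hP]
  have : 1 - t ≠ 0 := by linarith
  rcases ht with rfl | rfl
  · norm_num
  · field_simp
    ring

lemma sum_mul_log_one_div_tiltedProfile [Fintype X] (hpos : ∀ x, 0 < P x) (hP : ∑ x, P x = 1)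
    (ht : t = 1 / 2 ∨ t = P x₀) (ht0 : 0 < t) (ht1 : t < 1) :
    ∑ x, P x * log (1 / tiltedProfile P x₀ t x) = ∑ x, P x * log (1 / P x) - binEnt t := by
  have h : ∀ x, P x * log (1 / tiltedProfile P x₀ t x)
      = P x * log (1 / P x) + (if x = x₀ then log t else log (1 - t)) * P x := by
    intro x
    have hw : (if x = x₀ then t else 1 - t) ≠ 0 := by split_ifs <;> linarith
    rw [tiltedProfile, one_div_div, log_div hw (hpos x).ne', one_div, log_inv]
    split_ifs <;> ring
  rw [Finset.sum_congr rfl fun x _ => h x, Finset.sum_add_distrib, Finset.sum_ite_eq_mul, hP,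
    binEnt]
  rcases ht with rfl | rfl
  · norm_num
    ring
  · ring

lemma sum_mul_div_tiltedProfile_le_one [Fintype X] (hpos : ∀ x, 0 < P x) (ht : 1 / 2 ≤ t)
    (ht1 : t < 1) {c : X → ℝ} (hc : c x₀ ≤ 1) (hsum : ∑ x, c x ≤ 2) :
    ∑ x, P x * (c x / tiltedProfile P x₀ t x) ≤ 1 := by
  have h : ∀ x,
      P x * (c x / tiltedProfile P x₀ t x) = (if x = x₀ then t else 1 - t) * c x := by
    intro x
    have hw : (if x = x₀ then t else 1 - t) ≠ 0 := by split_ifs <;> linarith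
    rw [tiltedProfile]
    field_simp [(hpos x).ne']
  rw [Finset.sum_congr rfl fun x _ => h x, Finset.sum_ite_eq_mul]
  nlinarith [mul_le_mul_of_nonneg_left hsum (by linarith : (0 : ℝ) ≤ 1 - t),
    mul_le_mul_of_nonneg_left hc (by linarith : (0 : ℝ) ≤ 2 * t - 1)]

end TiltedProfile

section LogLoss

variable {X : Type*} [Fintype X] {P c : X → ℝ}

lemma logLossE_nonneg {q : ℝ} (h0 : 0 ≤ q) (h1 : q ≤ 1) : 0 ≤ logLossE q := by
  unfold logLossE
  split_ifs with hq
  · exact le_top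
  · exact EReal.coe_nonneg.2 (log_nonneg (one_le_one_div (lt_of_le_of_ne h0 (Ne.symm hq)) h1))

lemma sum_coe_mul_logLossE_of_pos (hc : ∀ x, 0 < c x) :
    ∑ x, (P x : EReal) * logLossE (c x) = ((∑ x, P x * log (1 / c x) : ℝ) : EReal) := by
  rw [EReal.coe_finset_sum]
  refine Finset.sum_congr rfl fun x _ => ?_
  rw [logLossE, if_neg (hc x).ne', EReal.coe_mul]

lemma sum_coe_mul_logLossE_eq_top (hP : ∀ x, 0 < P x) (hc0 : ∀ x, 0 ≤ c x)
    (hc1 : ∀ x, c x ≤ 1) {x₀ : X} (hx₀ : c x₀ = 0) : ∑ x, (P x : EReal) * logLossE (c x) = ⊤ := by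
  refine eq_top_iff.2 ?_
  calc ⊤ = (P x₀ : EReal) * logLossE (c x₀) := by
        rw [hx₀, logLossE, if_pos rfl, EReal.coe_mul_top_of_pos (hP x₀)]
    _ ≤ ∑ x, (P x : EReal) * logLossE (c x) :=
        Finset.single_le_sum (fun x _ => mul_nonneg (EReal.coe_nonneg.2 (hP x).le)
          (logLossE_nonneg (hc0 x) (hc1 x))) (Finset.mem_univ x₀)

end LogLoss

/-- The minimal expected log-loss under 2 guesses equals
`H(X) − h_b(max{1/2, p_max})`. -/
theorem stmt15 {X : Type} [Fintype X] [Nonempty X] (hcard : 3 ≤ Fintype.card X)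
    (P : X → ℝ) (hP : IsPMF P) (hpos : ∀ x, 0 < P x) :
    IsLeast
      {v : EReal | ∃ Q : X × X → ℝ, IsPMF Q ∧
        v = ∑ x, ((P x : ℝ) : EReal) * logLossE (covers2 Q x)}
      ((((∑ x, P x * Real.log (1 / P x)) -
          binEnt (max (1 / 2) (Finset.univ.sup' Finset.univ_nonempty P)) : ℝ) : EReal)) := by
  classical
  obtain ⟨x₀, -, hx₀⟩ := Finset.exists_mem_eq_sup' Finset.univ_nonempty P
  have hmode : ∀ x, P x ≤ P x₀ := fun x => hx₀ ▸ Finset.le_sup' P (Finset.mem_univ x)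
  have hpair : ∀ x ≠ x₀, P x + P x₀ ≤ 1 := fun x hx => hP.add_le_one hx
  obtain ⟨y, hy⟩ := Fintype.exists_ne_of_one_lt_card (by omega) x₀
  rw [hx₀]
  set t := max (1 / 2) (P x₀)
  have ht : 1 / 2 ≤ t := le_max_left _ _
  have hx₀t : P x₀ ≤ t := le_max_right _ _
  have ht1 : t < 1 := max_lt (by norm_num) (by linarith [hpair y hy, hpos y])
  have hchoice : t = 1 / 2 ∨ t = P x₀ := max_choice _ _
  have hrest : ∀ x ≠ x₀, P x ≤ 1 - t := fun x hx => by
    rcases hchoice with h | h <;> linarith [hpair x hx, hmode x]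
  have hq := tiltedProfile_pos (x₀ := x₀) hpos (by linarith) ht1
  have hvalue := sum_mul_log_one_div_tiltedProfile hpos hP.2 hchoice (by linarith) ht1
  constructor
  · obtain ⟨Q, hQ, hcov⟩ := exists_isPMF_covers2_eq (fun x => (hq x).le)
      (tiltedProfile_le_one hx₀t hrest (by linarith) ht1)
      (sum_tiltedProfile hP.2 hchoice (by linarith) ht1)
    refine ⟨Q, hQ, ?_⟩
    simp only [hcov, sum_coe_mul_logLossE_of_pos hq, hvalue]
  · rintro _ ⟨Q, hQ, rfl⟩
    by_cases hc : ∀ x, 0 < covers2 Q x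
    · rw [sum_coe_mul_logLossE_of_pos hc, EReal.coe_le_coe_iff, ← hvalue]
      exact sum_mul_log_one_div_le hP hq hc (sum_mul_div_tiltedProfile_le_one hpos ht ht1
        (covers2_le_one hQ x₀) (sum_covers2_le_two hQ))
    · obtain ⟨x, hx⟩ := not_forall.1 hc
      rw [sum_coe_mul_logLossE_eq_top hpos (covers2_nonneg hQ) (covers2_le_one hQ)
        (le_antisymm (not_lt.1 hx) (covers2_nonneg hQ x))]
      exact le_top
end

section
/- Let 𝒳={x_1,…,x_n} be a finite set, let k be a positive integer, and let (t_1,…,t_n)∈ℝ^n satisfy Σ_{i=1}^n t_i = k. Then there exists a pmf Q on 𝒳^k such that Q({(a_1,…,a_k)∈𝒳^k : a_j=x_i for some j}) = t_i for every i∈{1,…,n} if and only if 0 ≤ t_i ≤ 1 for every i∈{1,…,n}. -/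
open Finset

open Classical in
/-- The probability that a `k`-guess strategy `Q` covers `u`, i.e. the probability that some
guess equals `u`. -/
noncomputable def coversG {U : Type*} [Fintype U] {k : ℕ} (Q : (Fin k → U) → ℝ) (u : U) : ℝ :=
  ∑ a : Fin k → U, if ∃ j, a j = u then Q a else 0

/-! Covering probabilities depend linearly on `Q` and each is the probability of an event, so the
achievable vectors form a convex subset of `[0,1]ⁿ`. Conversely, a `0/1` vector with `k` ones is
achieved by the point mass at a tuple listing its support, and these vectors span the hypersimplex
`{t ∈ [0,1]ⁿ | ∑ t = k}` convexly: by Krein–Milman it suffices that its extreme points are `0/1`.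
A point with a fractional coordinate `tᵢ` has a second one `tⱼ`, because the sum is an integer,
so it is the midpoint of the two points obtained by moving `±c` along `eᵢ - eⱼ`. -/

def hypersimplex (ι : Type*) [Fintype ι] (k : ℕ) : Set (ι → ℝ) :=
  Set.univ.pi (fun _ => Set.Icc 0 1) ∩ {t | ∑ i, t i = k}

section Hypersimplex

variable {ι : Type*} [Fintype ι] {k : ℕ} {t : ι → ℝ}

theorem isCompact_hypersimplex : IsCompact (hypersimplex ι k) :=
  (isCompact_univ_pi fun _ => isCompact_Icc).inter_right
    (isClosed_eq (by fun_prop) continuous_const)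

theorem convex_hypersimplex : Convex ℝ (hypersimplex ι k) :=
  (convex_pi fun _ _ => convex_Icc 0 1).inter <|
    convex_hyperplane ⟨fun _ _ => sum_add_distrib, fun _ _ => (mul_sum ..).symm⟩ _

theorem add_single_sub_single_mem_hypersimplex [DecidableEq ι] (ht : t ∈ hypersimplex ι k)
    {i j : ι} (hij : i ≠ j) {c : ℝ} (hi : t i + c ∈ Set.Icc 0 1) (hj : t j - c ∈ Set.Icc 0 1) :
    t + (Pi.single i c - Pi.single j c) ∈ hypersimplex ι k := by
  refine ⟨fun l _ => ?_, ?_⟩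
  · rcases eq_or_ne l i with rfl | hli
    · simpa [hij] using hi
    rcases eq_or_ne l j with rfl | hlj
    · simpa [hli, sub_eq_add_neg] using hj
    · simpa [hli, hlj] using ht.1 l trivial
  · simp only [Set.mem_ofPred_eq, Pi.add_apply, Pi.sub_apply, sum_add_distrib,
      sum_sub_distrib, sum_pi_single', mem_univ, if_true, sub_self, add_zero]
    exact ht.2

theorem exists_ne_mem_Ioo_of_mem_hypersimplex (ht : t ∈ hypersimplex ι k) {i : ι}
    (hi : t i ∈ Set.Ioo 0 1) :
    ∃ j ≠ i, t j ∈ Set.Ioo 0 1 := by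
  classical
  by_contra! h
  have hbin : ∀ j ∈ univ.erase i, t j = if t j = 1 then 1 else 0 := by
    intro j hj
    obtain ⟨h0, h1⟩ := ht.1 j trivial
    specialize h j (ne_of_mem_erase hj)
    split_ifs with hj1
    · exact hj1
    · by_contra hj0
      exact h ⟨lt_of_le_of_ne h0 (Ne.symm hj0), lt_of_le_of_ne h1 hj1⟩
  have hti : t i = k - #{j ∈ univ.erase i | t j = 1} := by
    rw [← ht.2, ← add_sum_erase univ t (mem_univ i), sum_congr rfl hbin, sum_boole]
    ring
  obtain ⟨h0, h1⟩ := hi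
  rw [hti] at h0 h1
  have hlt : #{j ∈ univ.erase i | t j = 1} < k := by exact_mod_cast sub_pos.mp h0
  have hgt : k < #{j ∈ univ.erase i | t j = 1} + 1 := by
    exact_mod_cast (by linarith : (k : ℝ) < #{j ∈ univ.erase i | t j = 1} + 1)
  omega

theorem extremePoints_hypersimplex_subset :
    (hypersimplex ι k).extremePoints ℝ ⊆ Set.univ.pi fun _ => {0, 1} := by
  classical
  intro t ht i _
  have hmem := ht.1
  by_contra hbin
  have hi : t i ∈ Set.Ioo 0 1 := by
    obtain ⟨h0, h1⟩ := hmem.1 i trivial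
    simp only [Set.mem_insert_iff, Set.mem_singleton_iff, not_or] at hbin
    exact ⟨lt_of_le_of_ne h0 (Ne.symm hbin.1), lt_of_le_of_ne h1 hbin.2⟩
  obtain ⟨j, hji, hj⟩ := exists_ne_mem_Ioo_of_mem_hypersimplex hmem hi
  set c := min (min (t i) (1 - t i)) (min (t j) (1 - t j))
  have hc : 0 < c := by
    simp only [c, lt_min_iff, sub_pos]; exact ⟨⟨hi.1, hi.2⟩, hj.1, hj.2⟩
  have hci : c ≤ t i ∧ c ≤ 1 - t i := ⟨by simp [c], by simp [c]⟩
  have hcj : c ≤ t j ∧ c ≤ 1 - t j := ⟨by simp [c], by simp [c]⟩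
  have hplus := add_single_sub_single_mem_hypersimplex (c := c) hmem hji.symm
    ⟨by linarith, by linarith⟩ ⟨by linarith, by linarith⟩
  have hminus := add_single_sub_single_mem_hypersimplex (c := -c) hmem hji.symm
    ⟨by linarith, by linarith⟩ ⟨by linarith, by linarith⟩
  have hseg : t ∈ openSegment ℝ (t + (Pi.single i (-c) - Pi.single j (-c)))
      (t + (Pi.single i c - Pi.single j c)) :=
    ⟨1 / 2, 1 / 2, by norm_num, by norm_num, by norm_num, by
      rw [Pi.single_neg, Pi.single_neg]; module⟩
  have hcoord := congrFun (ht.2 hminus hplus hseg) i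
  simp only [Pi.add_apply, Pi.sub_apply, Pi.single_eq_same, Pi.single_eq_of_ne hji.symm,
    sub_zero, add_eq_left, neg_eq_zero] at hcoord
  exact hc.ne' hcoord

theorem hypersimplex_subset_convexHull :
    hypersimplex ι k ⊆ convexHull ℝ (hypersimplex ι k ∩ Set.univ.pi fun _ => {0, 1}) := by
  have hfin : (hypersimplex ι k ∩ Set.univ.pi fun _ => ({0, 1} : Set ℝ)).Finite :=
    (Set.Finite.pi fun _ => Set.toFinite _).subset Set.inter_subset_right
  calc hypersimplex ι k = closure (convexHull ℝ ((hypersimplex ι k).extremePoints ℝ)) :=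
        (closure_convexHull_extremePoints isCompact_hypersimplex convex_hypersimplex).symm
    _ ⊆ closure (convexHull ℝ (hypersimplex ι k ∩ Set.univ.pi fun _ => {0, 1})) :=
        closure_mono <| convexHull_mono <|
          Set.subset_inter extremePoints_subset extremePoints_hypersimplex_subset
    _ = _ := (hfin.isClosed_convexHull (𝕜 := ℝ)).closure_eq

end Hypersimplex

def IsCoverVector {U : Type*} [Fintype U] (k : ℕ) (t : U → ℝ) : Prop :=
  ∃ Q : (Fin k → U) → ℝ, IsPMF Q ∧ ∀ u, coversG Q u = t u

section Covering

variable {U : Type*} [Fintype U] {k : ℕ}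

theorem coversG_nonneg {Q : (Fin k → U) → ℝ} (hQ : IsPMF Q) (u : U) : 0 ≤ coversG Q u :=
  sum_nonneg fun a _ => by split <;> simp [hQ.1 a]

theorem coversG_le_one {Q : (Fin k → U) → ℝ} (hQ : IsPMF Q) (u : U) : coversG Q u ≤ 1 :=
  hQ.2 ▸ sum_le_sum fun a _ => by split <;> simp [hQ.1 a]

theorem coversG_add_smul (Q R : (Fin k → U) → ℝ) (a b : ℝ) (u : U) :
    coversG (a • Q + b • R) u = a * coversG Q u + b * coversG R u := by
  simp only [coversG, mul_sum, ← sum_add_distrib]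
  refine sum_congr rfl fun x _ => ?_
  split <;> simp

theorem coversG_single [DecidableEq U] (a : Fin k → U) (u : U) :
    coversG (Pi.single a 1) u = (Set.range a).indicator 1 u := by
  rw [coversG, sum_eq_single a (fun b _ hb => by simp [hb]) (by simp)]
  simp [Set.indicator_apply]

theorem convex_setOf_isCoverVector : Convex ℝ {t : U → ℝ | IsCoverVector k t} := by
  rintro s ⟨Q, hQ, hs⟩ t ⟨R, hR, ht⟩ a b ha hb hab
  refine ⟨a • Q + b • R, convex_stdSimplex ℝ _ hQ hR ha hb hab, fun u => ?_⟩
  simp [coversG_add_smul, hs, ht]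

theorem isCoverVector_of_mem_hypersimplex_of_binary {t : U → ℝ}
    (ht : t ∈ hypersimplex U k ∩ Set.univ.pi fun _ => {0, 1}) : IsCoverVector k t := by
  classical
  obtain ⟨⟨-, hsum⟩, hbin⟩ := ht
  simp only [Set.mem_univ_pi, Set.mem_insert_iff, Set.mem_singleton_iff] at hbin
  have ht01 : ∀ u, t u = if t u = 1 then 1 else 0 := fun u => by
    rcases hbin u with h | h <;> simp [h]
  have hcard : #{u | t u = 1} = k := by
    have hsum_eq : ∑ u, t u = #{u | t u = 1} := by
      rw [← sum_boole]; exact sum_congr rfl fun u _ => ht01 u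
    exact_mod_cast hsum_eq.symm.trans hsum
  let a : Fin k → U := fun j => (Finset.equivFinOfCardEq hcard).symm j
  have hrange : ∀ u, u ∈ Set.range a ↔ t u = 1 := fun u =>
    ⟨by rintro ⟨j, rfl⟩; exact (mem_filter.mp ((Finset.equivFinOfCardEq hcard).symm j).2).2,
      fun hu => ⟨Finset.equivFinOfCardEq hcard ⟨u, by simpa using hu⟩, by simp [a]⟩⟩
  refine ⟨Pi.single a 1, ⟨fun b => ?_, by simp⟩, fun u => ?_⟩
  · by_cases hb : b = a <;> simp [hb]
  · rw [coversG_single, Set.indicator_apply, ht01 u]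
    simp [hrange]

end Covering

theorem stmt18_general (n k : ℕ) (t : Fin n → ℝ) (hsum : ∑ i, t i = k) :
    (∃ Q : (Fin k → Fin n) → ℝ, IsPMF Q ∧ ∀ i, coversG Q i = t i) ↔
      ∀ i, 0 ≤ t i ∧ t i ≤ 1 := by
  constructor
  · rintro ⟨Q, hQ, hcov⟩ i
    exact hcov i ▸ ⟨coversG_nonneg hQ i, coversG_le_one hQ i⟩
  · intro hbounds
    have ht : t ∈ hypersimplex (Fin n) k := ⟨fun i _ => hbounds i, hsum⟩
    exact convexHull_min (fun _ => isCoverVector_of_mem_hypersimplex_of_binary)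
      convex_setOf_isCoverVector (hypersimplex_subset_convexHull ht)

/-- (Admissibility of cover vectors; Farkas-type lemma.)
A vector `(t_1,…,t_n)` with `∑_i t_i = k` arises as the covering-probability vector of some
`k`-guess strategy (a pmf on `𝒳^k`) if and only if `0 ≤ t_i ≤ 1` for every `i`. -/
theorem stmt18 (n k : ℕ) (hk : 0 < k) (t : Fin n → ℝ) (hsum : ∑ i, t i = k) :
    (∃ Q : (Fin k → Fin n) → ℝ, IsPMF Q ∧ ∀ i, coversG Q i = t i) ↔
      ∀ i, 0 ≤ t i ∧ t i ≤ 1 :=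
  stmt18_general n k t hsum
end
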